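/- Let a ∈ ℝ, ε₀ > 0, and let ψ, ξ : (−ε₀, ε₀) → ℂ be functions of class C⁷. Then there exist 0 < ε ≤ ε₀ and a real-valued function χ : (−ε, ε) → ℝ of class C⁷ such that for all s ∈ (−ε, ε): H₀( s + s⁵ψ(s), −s²/2 + s⁶χ(s), −3/4, −(3i/4)s + s⁵ξ(s) ) = 0, i.e. the model Fefferman Hamiltonian vanishes along the initial data z₂ = s + s⁵ψ(s), p_{x₀} = −s²/2 + s⁶χ(s), p_{y₁} = −3/4, p_{z₂} = −(3i/4)s + s⁵ξ(s). -/

import Mathlib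

/-!
`H₀` is real-valued, and along the initial data it equals `s⁶ Φ(s, t)` with `t = χ(s)`, where `Φ`
is `C⁷` in `s` and quadratic in `t`. Indeed `H₀` is weighted homogeneous (`z₂`, `p_{z₂}` of weight 1,
`p_{x₀}` of weight 2): its `a`-free part has weight 2 and its `a`-part weight 6, and after
rescaling the `a`-free part vanishes to order `s⁴` at the base point `(1, -1/2, -3/4, -3i/4)`.
At `s = 0` the coefficient of `t²` vanishes and that of `t` is `-3/2`, so the root of the
quadratic that stays bounded as its leading coefficient tends to `0` is a `C⁷` solution `χ`.
-/

open Complex ComplexConjugate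

/-- The model Fefferman Hamiltonian `H₀` associated to the hypersurface
`2 Re z₁ = |z₂|² + 2a|z₂|⁴ Re(z₂²)`, as a function of `(z₂, p_{x₀}, p_{y₁}, p_{z₂})`. -/
noncomputable def modelHamiltonian (a : ℝ) (z : ℂ) (p0 p1 : ℝ) (p : ℂ) : ℂ :=
  let zb : ℂ := conj z
  let pb : ℂ := conj p
  let n2 : ℂ := ((‖z‖ ^ 2 : ℝ) : ℂ)      -- |z₂|²
  let r2 : ℂ := (((z ^ 2).re : ℝ) : ℂ)             -- Re(z₂²)
  24 * (a : ℂ) * r2 * (p0 : ℂ) ^ 2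
    + (2 - (64 * (a : ℂ) / 3) * n2 * r2) * (p0 : ℂ) * (p1 : ℂ)
    + (Complex.I * (a : ℂ) / 3) * (24 * z ^ 2 * zb + 8 * zb ^ 3) * (p0 : ℂ) * p
    - (Complex.I * (a : ℂ) / 3) * (8 * z ^ 3 + 24 * z * zb ^ 2) * (p0 : ℂ) * pb
    + (1 / 3) * (-n2 + 4 * (a : ℂ) * n2 ^ 2 * r2) * (p1 : ℂ) ^ 2
    + (Complex.I / 3) * (zb - (a : ℂ) * z * (4 * n2 ^ 2 + 6 * zb ^ 4)) * (p1 : ℂ) * p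
    - (Complex.I / 3) * (z - (a : ℂ) * zb * (4 * n2 ^ 2 + 6 * z ^ 4)) * (p1 : ℂ) * pb
    - (1 / 3) * (1 - 16 * (a : ℂ) * n2 * r2) * ((‖p‖ ^ 2 : ℝ) : ℂ)

open Set Filter Topology

/-- For `b < 0`, the root of `a x² + b x + c` that tends to `-c / b` as `a → 0`, written without
dividing by `a`. -/
noncomputable def quadraticRoot (a b c : ℝ) : ℝ :=
  -2 * c / (b - √(discrim a b c))

theorem quadratic_quadraticRoot_eq_zero {a b c : ℝ} (hd : 0 ≤ discrim a b c) (hb : b < 0) :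
    a * quadraticRoot a b c ^ 2 + b * quadraticRoot a b c + c = 0 := by
  have hsq : √(discrim a b c) ^ 2 = b ^ 2 - 4 * a * c := by rw [Real.sq_sqrt hd, discrim]
  have hne : b - √(discrim a b c) ≠ 0 := by linarith [Real.sqrt_nonneg (discrim a b c)]
  unfold quadraticRoot
  field_simp
  linear_combination c * hsq

theorem ContDiffOn.quadraticRoot {E : Type*} [NormedAddCommGroup E] [NormedSpace ℝ E]
    {n : WithTop ℕ∞} {U : Set E} {a b c : E → ℝ}
    (ha : ContDiffOn ℝ n a U) (hb : ContDiffOn ℝ n b U) (hc : ContDiffOn ℝ n c U)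
    (hb_neg : ∀ x ∈ U, b x < 0) (hd_pos : ∀ x ∈ U, 0 < discrim (a x) (b x) (c x)) :
    ContDiffOn ℝ n (fun x => _root_.quadraticRoot (a x) (b x) (c x)) U := by
  have hd : ContDiffOn ℝ n (fun x => discrim (a x) (b x) (c x)) U := by
    simp only [discrim]; fun_prop
  refine (contDiffOn_const.mul hc).div (hb.sub (hd.sqrt fun x hx => (hd_pos x hx).ne')) ?_
  intro x hx
  linarith [hb_neg x hx, Real.sqrt_nonneg (discrim (a x) (b x) (c x))]

lemma exists_forall_mem_Ioo_of_eventually {p : ℝ → Prop} (hp : ∀ᶠ s in 𝓝 0, p s) {ε₀ : ℝ}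
    (hε₀ : 0 < ε₀) : ∃ ε, 0 < ε ∧ ε ≤ ε₀ ∧ ∀ s ∈ Ioo (-ε) ε, p s := by
  obtain ⟨δ, hδ, hδp⟩ := (nhds_basis_Ioo_pos (0 : ℝ)).eventually_iff.mp hp
  refine ⟨min δ ε₀, lt_min hδ hε₀, min_le_right _ _, fun s hs => hδp ?_⟩
  have hδ_le := min_le_left δ ε₀
  constructor <;> linarith [hs.1, hs.2]

theorem exists_contDiffOn_quadratic_root {n : WithTop ℕ∞} {ε₀ : ℝ} (hε₀ : 0 < ε₀)
    {a b c : ℝ → ℝ} (ha : ContDiffOn ℝ n a (Ioo (-ε₀) ε₀))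
    (hb : ContDiffOn ℝ n b (Ioo (-ε₀) ε₀)) (hc : ContDiffOn ℝ n c (Ioo (-ε₀) ε₀))
    (hb0 : b 0 < 0) (hd0 : 0 < discrim (a 0) (b 0) (c 0)) :
    ∃ ε, 0 < ε ∧ ε ≤ ε₀ ∧ ∃ χ : ℝ → ℝ, ContDiffOn ℝ n χ (Ioo (-ε) ε) ∧
      ∀ s ∈ Ioo (-ε) ε, a s * χ s ^ 2 + b s * χ s + c s = 0 := by
  have hU : Ioo (-ε₀) ε₀ ∈ 𝓝 (0 : ℝ) := Ioo_mem_nhds (neg_neg_iff_pos.mpr hε₀) hε₀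
  have hd : ContDiffOn ℝ n (fun s => discrim (a s) (b s) (c s)) (Ioo (-ε₀) ε₀) := by
    simp only [discrim]; fun_prop
  have hgood : ∀ᶠ s in 𝓝 0, s ∈ Ioo (-ε₀) ε₀ ∧ b s < 0 ∧ 0 < discrim (a s) (b s) (c s) :=
    Eventually.and hU (((hb.continuousOn.continuousAt hU).eventually (gt_mem_nhds hb0)).and
      ((hd.continuousOn.continuousAt hU).eventually (lt_mem_nhds hd0)))
  obtain ⟨ε, hε, hεε₀, hεgood⟩ := exists_forall_mem_Ioo_of_eventually hgood hε₀
  have hsub : Ioo (-ε) ε ⊆ Ioo (-ε₀) ε₀ := fun s hs => (hεgood s hs).1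
  refine ⟨ε, hε, hεε₀, fun s => quadraticRoot (a s) (b s) (c s),
    (ha.mono hsub).quadraticRoot (hb.mono hsub) (hc.mono hsub)
      (fun s hs => (hεgood s hs).2.1) (fun s hs => (hεgood s hs).2.2), fun s hs => ?_⟩
  exact quadratic_quadraticRoot_eq_zero (hεgood s hs).2.2.le (hεgood s hs).2.1

section ComplexSmoothness

variable {n : WithTop ℕ∞}

@[fun_prop]
lemma Complex.contDiff_conj : ContDiff ℝ n (conj : ℂ → ℂ) := conjCLE.contDiff

@[fun_prop]
lemma Complex.contDiff_re : ContDiff ℝ n re := reCLM.contDiff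

@[fun_prop]
lemma Complex.contDiff_im : ContDiff ℝ n im := imCLM.contDiff

@[fun_prop]
lemma Complex.contDiff_ofReal : ContDiff ℝ n ((↑) : ℝ → ℂ) := ofRealCLM.contDiff

end ComplexSmoothness

@[fun_prop]
lemma ContDiffOn.modelHamiltonian {E : Type*} [NormedAddCommGroup E] [NormedSpace ℝ E]
    {n : WithTop ℕ∞} {U : Set E} (a : ℝ) {z p : E → ℂ} {p0 p1 : E → ℝ}
    (hz : ContDiffOn ℝ n z U) (hp0 : ContDiffOn ℝ n p0 U) (hp1 : ContDiffOn ℝ n p1 U)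
    (hp : ContDiffOn ℝ n p U) :
    ContDiffOn ℝ n (fun x => _root_.modelHamiltonian a (z x) (p0 x) (p1 x) (p x)) U := by
  have hz_sq := hz.norm_sq ℝ
  have hp_sq := hp.norm_sq ℝ
  simp only [_root_.modelHamiltonian]
  fun_prop

lemma ofReal_norm_sq_eq_mul_conj (z : ℂ) : ((‖z‖ ^ 2 : ℝ) : ℂ) = z * conj z := by
  rw [mul_conj']; push_cast; rfl

lemma ofReal_re_sq_eq (z : ℂ) : (((z ^ 2).re : ℝ) : ℂ) = (z ^ 2 + conj z ^ 2) / 2 := by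
  rw [re_eq_add_conj, map_pow]

lemma ofReal_im_eq_mul_sub_conj (z : ℂ) : (z.im : ℂ) = I / 2 * (conj z - z) := by
  rw [im_eq_sub_conj]; field_simp; ring_nf; rw [I_sq]; ring

lemma conj_modelHamiltonian (a : ℝ) (z : ℂ) (p0 p1 : ℝ) (p : ℂ) :
    conj (modelHamiltonian a z p0 p1 p) = modelHamiltonian a z p0 p1 p := by
  simp only [modelHamiltonian, map_add, map_sub, map_mul, map_pow, map_neg, map_div₀,
    map_ofNat, map_one, conj_ofReal, conj_I, conj_conj]
  ring

lemma ofReal_re_modelHamiltonian (a : ℝ) (z : ℂ) (p0 p1 : ℝ) (p : ℂ) :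
    ((modelHamiltonian a z p0 p1 p).re : ℂ) = modelHamiltonian a z p0 p1 p :=
  conj_eq_iff_re.mp (conj_modelHamiltonian a z p0 p1 p)

lemma modelHamiltonian_weighted_scaling (a s : ℝ) (w : ℂ) (r p1 : ℝ) (q : ℂ) :
    modelHamiltonian a (s * w) (s ^ 2 * r) p1 (s * q) =
      s ^ 2 * modelHamiltonian 0 w r p1 q +
        s ^ 6 * (modelHamiltonian a w r p1 q - modelHamiltonian 0 w r p1 q) := by
  simp only [modelHamiltonian, ofReal_norm_sq_eq_mul_conj, ofReal_re_sq_eq, map_mul,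
    conj_ofReal]
  push_cast
  ring

/-- `(1, -1/2, -3/4, -3i/4)` is a zero of the quadratic polynomial `modelHamiltonian 0`;
this is its Taylor expansion there. -/
lemma modelHamiltonian_zero_expand_at_base (u t : ℝ) (P X : ℂ) :
    modelHamiltonian 0 (1 + u * P) (-1 / 2 + u * t) (-3 / 4) (-(3 * I / 4) + u * X) =
      u * (-(3 / 2) * t - 3 / 4 * P.re + X.im) + u ^ 2 * modelHamiltonian 0 P 0 (-3 / 4) X := by
  simp only [modelHamiltonian, ofReal_norm_sq_eq_mul_conj, map_mul, map_add, map_neg, map_div₀,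
    map_ofNat, map_one, conj_ofReal, conj_I, re_eq_add_conj, ofReal_im_eq_mul_sub_conj]
  push_cast
  ring_nf
  simp only [I_sq]
  ring

/-- `H₀` along the initial data, divided by `s⁶` (see `modelHamiltonian_initialData`). -/
noncomputable def rescaledHamiltonian (a : ℝ) (P X : ℂ) (s t : ℝ) : ℂ :=
  -(3 / 2) * t - 3 / 4 * P.re + X.im + s ^ 4 * modelHamiltonian 0 P 0 (-3 / 4) X
    + (modelHamiltonian a (1 + s ^ 4 * P) (-1 / 2 + s ^ 4 * t) (-3 / 4) (-(3 * I / 4) + s ^ 4 * X)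
      - modelHamiltonian 0 (1 + s ^ 4 * P) (-1 / 2 + s ^ 4 * t) (-3 / 4) (-(3 * I / 4) + s ^ 4 * X))

lemma modelHamiltonian_initialData (a s t : ℝ) (P X : ℂ) :
    modelHamiltonian a ((s : ℂ) + (s : ℂ) ^ 5 * P) (-s ^ 2 / 2 + s ^ 6 * t) (-3 / 4)
        (-(3 * I / 4) * (s : ℂ) + (s : ℂ) ^ 5 * X) =
      s ^ 6 * rescaledHamiltonian a P X s t := by
  have hz : (s : ℂ) + (s : ℂ) ^ 5 * P = s * (1 + (s : ℂ) ^ 4 * P) := by ring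
  have hp0 : -s ^ 2 / 2 + s ^ 6 * t = s ^ 2 * (-1 / 2 + s ^ 4 * t) := by ring
  have hp : -(3 * I / 4) * (s : ℂ) + (s : ℂ) ^ 5 * X = s * (-(3 * I / 4) + (s : ℂ) ^ 4 * X) := by
    ring
  have hbase := modelHamiltonian_zero_expand_at_base (s ^ 4) t P X
  push_cast at hbase
  rw [hz, hp0, hp, modelHamiltonian_weighted_scaling, rescaledHamiltonian, hbase]
  ring

lemma rescaledHamiltonian_eq_quadratic (a : ℝ) (P X : ℂ) (s t : ℝ) :
    rescaledHamiltonian a P X s t =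
      ((rescaledHamiltonian a P X s 1 + rescaledHamiltonian a P X s (-1)) / 2
          - rescaledHamiltonian a P X s 0) * t ^ 2
        + (rescaledHamiltonian a P X s 1 - rescaledHamiltonian a P X s (-1)) / 2 * t
        + rescaledHamiltonian a P X s 0 := by
  simp only [rescaledHamiltonian, modelHamiltonian]
  push_cast
  ring

lemma rescaledHamiltonian_zero (a : ℝ) (P X : ℂ) (t : ℝ) :
    rescaledHamiltonian a P X 0 t = -(3 / 2) * t + rescaledHamiltonian a P X 0 0 := by
  simp [rescaledHamiltonian]
  ring

/-- Existence of the correction `χ` making the model Hamiltonian vanish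
along the special family of initial conditions. -/
theorem exists_chi_model_hamiltonian_vanishes
    (a : ℝ) (ε₀ : ℝ) (hε₀ : 0 < ε₀) (ψ ξ : ℝ → ℂ)
    (hψ : ContDiffOn ℝ 7 ψ (Set.Ioo (-ε₀) ε₀))
    (hξ : ContDiffOn ℝ 7 ξ (Set.Ioo (-ε₀) ε₀)) :
    ∃ ε : ℝ, 0 < ε ∧ ε ≤ ε₀ ∧ ∃ χ : ℝ → ℝ, ContDiffOn ℝ 7 χ (Set.Ioo (-ε) ε) ∧
      ∀ s ∈ Set.Ioo (-ε) ε,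
        modelHamiltonian a ((s : ℂ) + (s : ℂ) ^ 5 * ψ s)
          (-s ^ 2 / 2 + s ^ 6 * χ s) (-3 / 4)
          (-(3 * Complex.I / 4) * (s : ℂ) + (s : ℂ) ^ 5 * ξ s) = 0 := by
  set F : ℝ → ℝ → ℝ := fun s t => (rescaledHamiltonian a (ψ s) (ξ s) s t).re with hF
  have hF_smooth (t : ℝ) : ContDiffOn ℝ 7 (fun s => F s t) (Ioo (-ε₀) ε₀) := by
    simp only [hF, rescaledHamiltonian]; fun_prop
  -- the coefficients of the quadratic `F s` are read off from its values at `t = 1, -1, 0`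
  have hF_quadratic (s t : ℝ) : F s t =
      ((F s 1 + F s (-1)) / 2 - F s 0) * t ^ 2 + (F s 1 - F s (-1)) / 2 * t + F s 0 := by
    simp only [hF]
    conv_lhs => rw [rescaledHamiltonian_eq_quadratic]
    simp [← ofReal_pow]
  have hF_zero (t : ℝ) : F 0 t = -(3 / 2) * t + F 0 0 := by
    simp [hF, rescaledHamiltonian_zero a (ψ 0) (ξ 0) t]
  have ha0 : (F 0 1 + F 0 (-1)) / 2 - F 0 0 = 0 := by rw [hF_zero 1, hF_zero (-1)]; ring
  have hb0 : (F 0 1 - F 0 (-1)) / 2 = -3 / 2 := by rw [hF_zero 1, hF_zero (-1)]; ring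
  obtain ⟨ε, hε, hεε₀, χ, hχ, hroot⟩ := exists_contDiffOn_quadratic_root hε₀
    (a := fun s => (F s 1 + F s (-1)) / 2 - F s 0) (b := fun s => (F s 1 - F s (-1)) / 2)
    (c := fun s => F s 0) (by fun_prop) (by fun_prop) (hF_smooth 0)
    (by rw [hb0]; norm_num) (by rw [discrim, ha0, hb0]; norm_num)
  refine ⟨ε, hε, hεε₀, χ, hχ, fun s hs => ?_⟩
  rw [← ofReal_re_modelHamiltonian, modelHamiltonian_initialData, ← ofReal_pow, re_ofReal_mul]
  change ((s ^ 6 * F s (χ s) : ℝ) : ℂ) = 0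
  rw [hF_quadratic, hroot s hs, mul_zero, ofReal_zero]
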